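/- For all n ≥ 0, R̄_{4,9}(12n+3) ≡ 0 (mod 8). -/

import Mathlib

/-- Number of overpartitions of `n` in which no part is divisible by `l` or by `m`
(an overpartition is a partition where the first occurrence of each part size may be
overlined, so each partition contributes `2 ^ (number of distinct part sizes)`). -/
def Rbar (l m n : ℕ) : ℕ :=
  ∑ p : Nat.Partition n,
    if ∀ i ∈ p.parts, ¬ l ∣ i ∧ ¬ m ∣ i then 2 ^ p.parts.toFinset.card else 0

/-!
Call a part admissible if it is divisible neither by 4 nor by 9, let `τ(x)` be the number of
admissible divisors of `x`, and let `A k` count the partitions of `N` into admissible parts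
with exactly `k` distinct part sizes. Since `2 ^ k ≡ 2, 4, 0 (mod 8)` for `k = 1, 2, ≥ 3`,
`R̄(N) ≡ 2 A 1 + 4 A 2 (mod 8)`, and `A 1 = τ(N)`.

The tuples `(x, y, d, e)` with `x + y = N`, `d ∣ x`, `e ∣ y` and `d, e` admissible number
`∑_{x + y = N} τ(x) τ(y)`. Those with `d ≠ e` are the partitions counted by `A 2` (with
`x / d` parts `d` and `y / e` parts `e`), each met twice; those with `d = e` number
`∑ (N / d - 1)` over the admissible `d ∣ N`. For `N ≡ 3 (mod 4)` one of `x, y` is `≡ 2` or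
`3 (mod 4)`, and its admissible divisors pair off (`d ↔ 2d`, `d ↔ 3d`, or `d ↔ x / d` as it
is not a square), so every term is even; as the terms for `(x, y)` and `(y, x)` coincide and
`N` is odd, the convolution is `≡ 0 (mod 4)`. Finally, for `3 ∣ N` the pairing `d ↔ 3d`
shows that `τ(N)` is even and that `∑ N / d ≡ 0 (mod 4)`, since
`N / d + N / 3d = 4 · N / 3d`. Hence `2 A 1 + 4 A 2 = 4 τ(N) + 2 ∑ τ(x) τ(y) - 2 ∑ N / d`
vanishes mod 8.
-/

open Finset

theorem Nat.even_card_divisors_of_not_isSquare {x : ℕ} (hx : ¬ IsSquare x) :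
    Even #x.divisors := by
  have hx0 : x ≠ 0 := by rintro rfl; exact hx ⟨0, rfl⟩
  rw [← ZMod.natCast_eq_zero_iff_even, card_eq_sum_ones, Nat.cast_sum, Nat.cast_one]
  refine sum_involution (fun d _ => x / d) (fun _ _ => by decide) (fun d hd _ h => hx ⟨d, ?_⟩)
    (fun d hd => Nat.mem_divisors.2 ⟨Nat.div_dvd_of_dvd (Nat.dvd_of_mem_divisors hd), hx0⟩)
    (fun d hd => Nat.div_div_self (Nat.dvd_of_mem_divisors hd) hx0)
  rw [← Nat.mul_div_cancel' (Nat.dvd_of_mem_divisors hd), h]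

theorem Nat.not_isSquare_of_mod_four_eq_three {x : ℕ} (hx : x % 4 = 3) : ¬ IsSquare x := by
  rintro ⟨r, rfl⟩
  have h := Nat.mul_mod r r 4
  have : r % 4 < 4 := Nat.mod_lt r (by norm_num)
  interval_cases r % 4 <;> omega

theorem four_dvd_sum_antidiagonal_of_odd {n : ℕ} (hn : Odd n) (f : ℕ × ℕ → ℕ)
    (hf : ∀ p, f p.swap = f p) (heven : ∀ p ∈ antidiagonal n, 2 ∣ f p) :
    4 ∣ ∑ p ∈ antidiagonal n, f p := by
  rw [← ZMod.natCast_eq_zero_iff, Nat.cast_sum]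
  refine sum_involution (fun p _ => p.swap) (fun p hp => ?_) (fun p hp _ h => ?_)
    (fun p hp => by simpa [add_comm] using hp) (fun p _ => p.swap_swap)
  · obtain ⟨k, hk⟩ := heven p hp
    rw [hf, ← two_mul, hk, Nat.cast_mul, ← mul_assoc]
    exact mul_eq_zero_of_left (by decide) _
  · rw [HasAntidiagonal.mem_antidiagonal] at hp
    obtain ⟨k, hk⟩ := hn
    have : p.2 = p.1 := congrArg Prod.fst h
    omega

theorem Multiset.eq_replicate_count_of_toFinset_eq_singleton {α : Type*} [DecidableEq α]
    {s : Multiset α} {d : α} (h : s.toFinset = {d}) : s = replicate (s.count d) d := by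
  conv_lhs => rw [← toFinset_sum_count_nsmul_eq s, h, Finset.sum_singleton, nsmul_singleton]

theorem Multiset.eq_replicate_add_replicate_of_toFinset_eq_pair {α : Type*} [DecidableEq α]
    {s : Multiset α} {d e : α} (hde : d ≠ e) (h : s.toFinset = {d, e}) :
    s = replicate (s.count d) d + replicate (s.count e) e := by
  conv_lhs => rw [← toFinset_sum_count_nsmul_eq s, h, Finset.sum_pair hde, nsmul_singleton,
    nsmul_singleton]

theorem Multiset.replicate_add_replicate_inj {α : Type*} [LinearOrder α] {a b a' b' : ℕ}
    {d e d' e' : α} (ha : a ≠ 0) (hb : b ≠ 0) (ha' : a' ≠ 0) (hb' : b' ≠ 0) (hde : d < e)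
    (hde' : d' < e') (h : replicate a d + replicate b e = replicate a' d' + replicate b' e') :
    d = d' ∧ e = e' ∧ a = a' ∧ b = b' := by
  have hmem : ∀ i, (i = d ∨ i = e) ↔ (i = d' ∨ i = e') := fun i => by
    simpa [ha, hb, ha', hb', mem_replicate, and_or_left] using congrArg (i ∈ ·) h
  obtain ⟨rfl, rfl⟩ : d = d' ∧ e = e' := by
    rcases (hmem d).1 (.inl rfl) with h₁ | h₁ <;> rcases (hmem e).1 (.inr rfl) with h₂ | h₂ <;>
      rcases (hmem d').2 (.inl rfl) with h₃ | h₃ <;> constructor <;> order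
  have hc := fun i => congrArg (count i) h
  simpa [count_replicate, hde.ne, hde.ne'] using And.intro (hc d) (hc e)

section PartsSatisfying

variable {P : ℕ → Prop} [DecidablePred P]

variable (P) in
def divisorsWith (x : ℕ) : Finset ℕ := {d ∈ x.divisors | P d}

theorem mem_divisorsWith {x d : ℕ} : d ∈ divisorsWith P x ↔ (d ∣ x ∧ x ≠ 0) ∧ P d := by
  simp [divisorsWith]

theorem pos_of_mem_divisorsWith {x d : ℕ} (h : d ∈ divisorsWith P x) : 0 < d :=
  Nat.pos_of_mem_divisors (mem_filter.1 h).1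

theorem div_ne_zero_of_mem_divisorsWith {x d : ℕ} (h : d ∈ divisorsWith P x) : x / d ≠ 0 := by
  obtain ⟨⟨hdx, hx⟩, -⟩ := mem_divisorsWith.1 h
  exact (Nat.div_ne_zero_iff_of_dvd hdx).2 ⟨hx, ne_zero_of_dvd_ne_zero hx hdx⟩

theorem filter_dvd_divisorsWith_eq_image {p x : ℕ} (hp : p.Prime) (hpx : p ∣ x)
    (hP : ∀ d, P (p * d) ↔ ¬ p ∣ d ∧ P d) :
    {d ∈ divisorsWith P x | p ∣ d} = {d ∈ divisorsWith P x | ¬ p ∣ d}.image (p * ·) := by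
  ext d
  simp only [mem_filter, mem_image, mem_divisorsWith]
  constructor
  · rintro ⟨⟨⟨hdx, hx⟩, hd⟩, e, rfl⟩
    have he := (hP e).1 hd
    exact ⟨e, ⟨⟨⟨(dvd_mul_left e p).trans hdx, hx⟩, he.2⟩, he.1⟩, rfl⟩
  · rintro ⟨e, ⟨⟨⟨hex, hx⟩, he⟩, hpe⟩, rfl⟩
    exact ⟨⟨⟨(hp.coprime_iff_not_dvd.2 hpe).mul_dvd_of_dvd_of_dvd hpx hex, hx⟩,
      (hP e).2 ⟨hpe, he⟩⟩, dvd_mul_right p e⟩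

theorem card_divisorsWith_eq_two_mul {p x : ℕ} (hp : p.Prime) (hpx : p ∣ x)
    (hP : ∀ d, P (p * d) ↔ ¬ p ∣ d ∧ P d) :
    #(divisorsWith P x) = 2 * #{d ∈ divisorsWith P x | ¬ p ∣ d} := by
  rw [← card_filter_add_card_filter_not (p := (p ∣ ·)), filter_dvd_divisorsWith_eq_image hp hpx hP,
    card_image_of_injective _ (mul_right_injective₀ hp.ne_zero), two_mul]

theorem succ_dvd_sum_div_divisorsWith {p x : ℕ} (hp : p.Prime) (hpx : p ∣ x)
    (hP : ∀ d, P (p * d) ↔ ¬ p ∣ d ∧ P d) :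
    p + 1 ∣ ∑ d ∈ divisorsWith P x, x / d := by
  rw [← sum_filter_add_sum_filter_not _ (p ∣ ·), filter_dvd_divisorsWith_eq_image hp hpx hP,
    sum_image fun _ _ _ _ => (mul_right_injective₀ hp.ne_zero ·), ← sum_add_distrib]
  refine dvd_sum fun d hd => ?_
  rw [mem_filter] at hd
  obtain ⟨k, hk⟩ :=
    (hp.coprime_iff_not_dvd.2 hd.2).mul_dvd_of_dvd_of_dvd hpx (mem_divisorsWith.1 hd.1).1.1
  have hd0 := pos_of_mem_divisorsWith hd.1
  have hpd : x / (p * d) = k := by rw [hk, Nat.mul_div_cancel_left _ (Nat.mul_pos hp.pos hd0)]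
  have hxd : x / d = p * k := by rw [hk, mul_comm p, mul_assoc, Nat.mul_div_cancel_left _ hd0]
  exact ⟨k, by rw [hpd, hxd]; ring⟩

variable (P) in
def partitionsWithDistinctParts (k n : ℕ) : Finset n.Partition :=
  {p | (∀ i ∈ p.parts, P i) ∧ p.parts.toFinset.card = k}

theorem card_partitionsWithDistinctParts_one (n : ℕ) :
    #(partitionsWithDistinctParts P 1 n) = #(divisorsWith P n) := by
  symm
  refine card_bij (fun d hd => ⟨Multiset.replicate (n / d) d, fun hi => ?_, ?_⟩) (fun d hd => ?_)
    (fun d₁ hd₁ d₂ _ h => ?_) (fun p hp => ?_)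
  · exact Multiset.eq_of_mem_replicate hi ▸ pos_of_mem_divisorsWith hd
  · rw [Multiset.sum_replicate, smul_eq_mul, Nat.div_mul_cancel (mem_divisorsWith.1 hd).1.1]
  · simp only [partitionsWithDistinctParts, mem_filter, mem_univ, true_and,
      Multiset.toFinset_replicate, if_neg (div_ne_zero_of_mem_divisorsWith hd)]
    exact ⟨fun i hi => Multiset.eq_of_mem_replicate hi ▸ (mem_divisorsWith.1 hd).2,
      card_singleton d⟩
  · have h : Multiset.replicate (n / d₁) d₁ = Multiset.replicate (n / d₂) d₂ :=
      congrArg Nat.Partition.parts h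
    exact Multiset.eq_of_mem_replicate
      (h ▸ Multiset.mem_replicate.2 ⟨div_ne_zero_of_mem_divisorsWith hd₁, rfl⟩)
  · simp only [partitionsWithDistinctParts, mem_filter, mem_univ, true_and] at hp
    obtain ⟨d, hd⟩ := card_eq_one.1 hp.2
    have hdp : d ∈ p.parts := Multiset.mem_toFinset.1 (hd ▸ mem_singleton_self d)
    have hparts := Multiset.eq_replicate_count_of_toFinset_eq_singleton hd
    have hsum : p.parts.count d * d = n := by
      have h := p.parts_sum
      rwa [hparts, Multiset.sum_replicate, smul_eq_mul] at h
    have hd0 := p.parts_pos hdp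
    have hc0 := Multiset.count_pos.2 hdp
    refine ⟨d, mem_divisorsWith.2 ⟨⟨Dvd.intro_left _ hsum, ?_⟩, hp.1 d hdp⟩, Nat.Partition.ext ?_⟩
    · rw [← hsum]; positivity
    · show Multiset.replicate (n / d) d = p.parts
      rw [Nat.div_eq_of_eq_mul_left hd0 hsum.symm, ← hparts]

variable (P) in
/-- `⟨(x, y), (d, e)⟩` stands for the multiset of `x / d` copies of `d` and `y / e` copies
of `e`, a partition of `n = x + y`. -/
def blockPairs (n : ℕ) : Finset (Σ _ : ℕ × ℕ, ℕ × ℕ) :=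
  (antidiagonal n).sigma fun xy => divisorsWith P xy.1 ×ˢ divisorsWith P xy.2

theorem mem_blockPairs {n x y d e : ℕ} :
    ⟨(x, y), (d, e)⟩ ∈ blockPairs P n ↔
      x + y = n ∧ d ∈ divisorsWith P x ∧ e ∈ divisorsWith P y := by
  simp [blockPairs]

theorem card_blockPairs (n : ℕ) :
    #(blockPairs P n) = ∑ xy ∈ antidiagonal n, #(divisorsWith P xy.1) * #(divisorsWith P xy.2) := by
  simp only [blockPairs, card_sigma, card_product]

def blockPairs.toPartition {n : ℕ} (t : Σ _ : ℕ × ℕ, ℕ × ℕ) (ht : t ∈ blockPairs P n) :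
    n.Partition where
  parts := Multiset.replicate (t.1.1 / t.2.1) t.2.1 + Multiset.replicate (t.1.2 / t.2.2) t.2.2
  parts_pos := by
    obtain ⟨⟨x, y⟩, d, e⟩ := t
    obtain ⟨-, hd, he⟩ := mem_blockPairs.1 ht
    intro i hi
    rcases Multiset.mem_add.1 hi with hi | hi <;> rw [Multiset.eq_of_mem_replicate hi]
    exacts [pos_of_mem_divisorsWith hd, pos_of_mem_divisorsWith he]
  parts_sum := by
    obtain ⟨⟨x, y⟩, d, e⟩ := t
    obtain ⟨hxy, hd, he⟩ := mem_blockPairs.1 ht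
    simp only [Multiset.sum_add, Multiset.sum_replicate, smul_eq_mul]
    rw [Nat.div_mul_cancel (mem_divisorsWith.1 hd).1.1,
      Nat.div_mul_cancel (mem_divisorsWith.1 he).1.1, hxy]

theorem blockPairs.toPartition_mem {n : ℕ} {t : Σ _ : ℕ × ℕ, ℕ × ℕ} (ht : t ∈ blockPairs P n)
    (hlt : t.2.1 < t.2.2) : toPartition t ht ∈ partitionsWithDistinctParts P 2 n := by
  obtain ⟨⟨x, y⟩, d, e⟩ := t
  obtain ⟨-, hd, he⟩ := mem_blockPairs.1 ht
  simp only [partitionsWithDistinctParts, toPartition, mem_filter, mem_univ, true_and,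
    Multiset.mem_add, Multiset.mem_replicate, Multiset.toFinset_add, Multiset.toFinset_replicate,
    if_neg (div_ne_zero_of_mem_divisorsWith hd), if_neg (div_ne_zero_of_mem_divisorsWith he),
    ← insert_eq, card_pair hlt.ne]
  rw [mem_divisorsWith] at hd he
  exact ⟨by rintro i (⟨-, rfl⟩ | ⟨-, rfl⟩) <;> tauto, trivial⟩

theorem blockPairs.toPartition_inj {n : ℕ} {t t' : Σ _ : ℕ × ℕ, ℕ × ℕ} (ht : t ∈ blockPairs P n)
    (ht' : t' ∈ blockPairs P n) (hlt : t.2.1 < t.2.2) (hlt' : t'.2.1 < t'.2.2)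
    (h : toPartition t ht = toPartition t' ht') : t = t' := by
  obtain ⟨⟨x, y⟩, d, e⟩ := t
  obtain ⟨⟨x', y'⟩, d', e'⟩ := t'
  obtain ⟨-, hd, he⟩ := mem_blockPairs.1 ht
  obtain ⟨-, hd', he'⟩ := mem_blockPairs.1 ht'
  obtain ⟨rfl, rfl, hx, hy⟩ := Multiset.replicate_add_replicate_inj
    (div_ne_zero_of_mem_divisorsWith hd) (div_ne_zero_of_mem_divisorsWith he)
    (div_ne_zero_of_mem_divisorsWith hd') (div_ne_zero_of_mem_divisorsWith he') hlt hlt'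
    (congrArg Nat.Partition.parts h)
  rw [mem_divisorsWith] at hd he hd' he'
  rw [← Nat.div_mul_cancel hd.1.1, ← Nat.div_mul_cancel he.1.1, hx, hy,
    Nat.div_mul_cancel hd'.1.1, Nat.div_mul_cancel he'.1.1]

theorem blockPairs.exists_toPartition_eq {n : ℕ} {p : n.Partition}
    (hp : p ∈ partitionsWithDistinctParts P 2 n) :
    ∃ t, ∃ (ht : t ∈ blockPairs P n), t.2.1 < t.2.2 ∧ toPartition t ht = p := by
  simp only [partitionsWithDistinctParts, mem_filter, mem_univ, true_and] at hp
  obtain ⟨d, e, hde, hpde⟩ : ∃ d e, d < e ∧ p.parts.toFinset = {d, e} := by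
    obtain ⟨a, b, hab, h⟩ := card_eq_two.1 hp.2
    rcases hab.lt_or_gt with hab | hab
    exacts [⟨a, b, hab, h⟩, ⟨b, a, hab, h.trans (pair_comm a b)⟩]
  have hparts := Multiset.eq_replicate_add_replicate_of_toFinset_eq_pair hde.ne hpde
  have hdp : d ∈ p.parts := Multiset.mem_toFinset.1 (hpde ▸ mem_insert_self d {e})
  have hep : e ∈ p.parts :=
    Multiset.mem_toFinset.1 (hpde ▸ mem_insert_of_mem (mem_singleton_self e))
  have hsum : p.parts.count d * d + p.parts.count e * e = n := by
    have h := p.parts_sum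
    rwa [hparts, Multiset.sum_add, Multiset.sum_replicate, Multiset.sum_replicate, smul_eq_mul,
      smul_eq_mul] at h
  have hd0 := p.parts_pos hdp
  have he0 := p.parts_pos hep
  have hcd := (Multiset.count_pos.2 hdp).ne'
  have hce := (Multiset.count_pos.2 hep).ne'
  refine ⟨⟨(p.parts.count d * d, p.parts.count e * e), (d, e)⟩, mem_blockPairs.2
    ⟨hsum, mem_divisorsWith.2 ⟨⟨dvd_mul_left _ _, by positivity⟩, hp.1 d hdp⟩,
      mem_divisorsWith.2 ⟨⟨dvd_mul_left _ _, by positivity⟩, hp.1 e hep⟩⟩, hde, ?_⟩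
  ext1
  simp only [toPartition, Nat.mul_div_cancel _ hd0, Nat.mul_div_cancel _ he0]
  exact hparts.symm

theorem card_partitionsWithDistinctParts_two (n : ℕ) :
    #(partitionsWithDistinctParts P 2 n) = #{t ∈ blockPairs P n | t.2.1 < t.2.2} := by
  symm
  refine card_bij (fun t ht => blockPairs.toPartition t (mem_filter.1 ht).1)
    (fun t ht => blockPairs.toPartition_mem _ (mem_filter.1 ht).2)
    (fun t ht t' ht' => blockPairs.toPartition_inj _ _ (mem_filter.1 ht).2 (mem_filter.1 ht').2)
    (fun p hp => ?_)
  obtain ⟨t, ht, hlt, rfl⟩ := blockPairs.exists_toPartition_eq hp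
  exact ⟨t, mem_filter.2 ⟨ht, hlt⟩, rfl⟩

theorem card_blockPairs_lt_eq_card_gt (n : ℕ) :
    #{t ∈ blockPairs P n | t.2.1 < t.2.2} = #{t ∈ blockPairs P n | t.2.2 < t.2.1} := by
  refine card_nbij' (fun t => ⟨t.1.swap, t.2.swap⟩) (fun t => ⟨t.1.swap, t.2.swap⟩) ?_ ?_
    (fun _ _ => rfl) (fun _ _ => rfl) <;>
  · rintro ⟨⟨x, y⟩, d, e⟩ ht
    simp only [coe_filter, Set.mem_ofPred_eq, mem_blockPairs, Prod.swap_prod_mk] at ht ⊢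
    exact ⟨⟨by omega, ht.1.2.2, ht.1.2.1⟩, ht.2⟩

theorem card_blockPairs_diag (n : ℕ) :
    #{t ∈ blockPairs P n | t.2.1 = t.2.2} = #((divisorsWith P n).sigma fun d => Ico 1 (n / d)) := by
  refine card_nbij' (fun t => ⟨t.2.1, t.1.1 / t.2.1⟩)
    (fun s => ⟨(s.2 * s.1, n - s.2 * s.1), (s.1, s.1)⟩) ?_ ?_ ?_ ?_
  · rintro ⟨⟨x, y⟩, d, e⟩ ht
    simp only [coe_filter, Set.mem_ofPred_eq, mem_blockPairs, mem_divisorsWith] at ht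
    obtain ⟨⟨rfl, ⟨⟨⟨a, rfl⟩, hx⟩, hd⟩, ⟨⟨b, rfl⟩, hy⟩, -⟩, rfl⟩ := ht
    have hd0 : 0 < d := Nat.pos_of_ne_zero (left_ne_zero_of_mul hx)
    have ha := right_ne_zero_of_mul hx
    have hb := right_ne_zero_of_mul hy
    simp only [coe_sigma, Set.mem_sigma_iff, mem_coe, mem_divisorsWith, mem_Ico, ← mul_add,
      Nat.mul_div_cancel_left _ hd0]
    exact ⟨⟨⟨dvd_mul_right _ _, by positivity⟩, hd⟩, by omega, by omega⟩
  · rintro ⟨d, k⟩ hs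
    simp only [coe_sigma, Set.mem_sigma_iff, mem_coe, mem_divisorsWith, mem_Ico] at hs
    obtain ⟨⟨⟨⟨m, rfl⟩, hn⟩, hd⟩, hk, hkm⟩ := hs
    have hd0 : 0 < d := Nat.pos_of_ne_zero (left_ne_zero_of_mul hn)
    rw [Nat.mul_div_cancel_left _ hd0] at hkm
    have hkd : k * d < d * m := by nlinarith
    simp only [coe_filter, Set.mem_ofPred_eq, mem_blockPairs, mem_divisorsWith]
    exact ⟨⟨by omega, ⟨⟨dvd_mul_left _ _, by positivity⟩, hd⟩,
      ⟨Nat.dvd_sub (dvd_mul_right _ _) (dvd_mul_left _ _), by omega⟩, hd⟩, trivial⟩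
  · rintro ⟨⟨x, y⟩, d, e⟩ ht
    simp only [coe_filter, Set.mem_ofPred_eq, mem_blockPairs, mem_divisorsWith] at ht
    obtain ⟨⟨rfl, ⟨⟨hdx, -⟩, -⟩, -⟩, rfl⟩ := ht
    simp only [Nat.div_mul_cancel hdx, Nat.add_sub_cancel_left]
  · rintro ⟨d, k⟩ hs
    simp only [coe_sigma, Set.mem_sigma_iff, mem_coe] at hs
    simp only [Nat.mul_div_cancel _ (pos_of_mem_divisorsWith hs.1)]

theorem card_blockPairs_diag_add_card_divisorsWith (n : ℕ) :
    #{t ∈ blockPairs P n | t.2.1 = t.2.2} + #(divisorsWith P n)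
      = ∑ d ∈ divisorsWith P n, n / d := by
  rw [card_blockPairs_diag, card_sigma, card_eq_sum_ones, ← sum_add_distrib]
  refine sum_congr rfl fun d hd => ?_
  rw [Nat.card_Ico,
    Nat.sub_add_cancel (Nat.one_le_iff_ne_zero.2 (div_ne_zero_of_mem_divisorsWith hd))]

theorem card_blockPairs_add_card_divisorsWith (n : ℕ) :
    #(blockPairs P n) + #(divisorsWith P n)
      = 2 * #(partitionsWithDistinctParts P 2 n) + ∑ d ∈ divisorsWith P n, n / d := by
  have hgt : {t ∈ blockPairs P n | ¬ t.2.1 < t.2.2 ∧ t.2.2 < t.2.1}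
      = {t ∈ blockPairs P n | t.2.2 < t.2.1} := filter_congr fun _ _ => by omega
  have heq : {t ∈ blockPairs P n | ¬ t.2.1 < t.2.2 ∧ ¬ t.2.2 < t.2.1}
      = {t ∈ blockPairs P n | t.2.1 = t.2.2} := filter_congr fun _ _ => by omega
  rw [← card_blockPairs_diag_add_card_divisorsWith, card_partitionsWithDistinctParts_two, two_mul]
  nth_rw 2 [card_blockPairs_lt_eq_card_gt]
  rw [← card_filter_add_card_filter_not (s := blockPairs P n) (p := fun t => t.2.1 < t.2.2),
    ← card_filter_add_card_filter_not (s := {t ∈ blockPairs P n | ¬ t.2.1 < t.2.2})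
      (p := fun t => t.2.2 < t.2.1), filter_filter, filter_filter, hgt, heq]
  ring

end PartsSatisfying

theorem Rbar_modEq_eight (l m : ℕ) {n : ℕ} (hn : n ≠ 0) :
    Rbar l m n ≡ 2 * #(partitionsWithDistinctParts (fun i => ¬ l ∣ i ∧ ¬ m ∣ i) 1 n)
      + 4 * #(partitionsWithDistinctParts (fun i => ¬ l ∣ i ∧ ¬ m ∣ i) 2 n) [MOD 8] := by
  rw [← ZMod.natCast_eq_natCast_iff]
  simp only [Rbar, partitionsWithDistinctParts, card_filter, Nat.cast_add, Nat.cast_mul,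
    Nat.cast_sum, Nat.cast_ite, Nat.cast_pow, Nat.cast_zero, Nat.cast_one, mul_sum,
    ← sum_add_distrib]
  refine sum_congr rfl fun p _ => ?_
  have hk : p.parts.toFinset.card ≠ 0 := by
    rw [Ne, card_eq_zero, Multiset.toFinset_eq_empty]
    exact fun h => hn (p.parts_sum ▸ h ▸ Multiset.sum_zero)
  generalize p.parts.toFinset.card = k at hk ⊢
  obtain _ | _ | _ | k := k
  · exact absurd rfl hk
  · norm_num
  · norm_num
  · have h8 : (2 : ZMod 8) ^ (k + 3) = 0 := by
      rw [pow_add]; exact mul_eq_zero_of_right _ (by decide)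
    simp [h8]

theorem even_card_divisorsWith_four_nine {x : ℕ} (hx : x % 4 = 2 ∨ x % 4 = 3) :
    Even #(divisorsWith (fun i => ¬ 4 ∣ i ∧ ¬ 9 ∣ i) x) := by
  by_cases h2 : 2 ∣ x
  · rw [card_divisorsWith_eq_two_mul Nat.prime_two h2 fun d => by omega]
    exact even_two_mul _
  by_cases h3 : 3 ∣ x
  · rw [card_divisorsWith_eq_two_mul Nat.prime_three h3 fun d => by omega]
    exact even_two_mul _
  have hall : divisorsWith (fun i => ¬ 4 ∣ i ∧ ¬ 9 ∣ i) x = x.divisors :=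
    filter_true_of_mem fun d hd => by
      have hdx := Nat.dvd_of_mem_divisors hd
      exact ⟨fun h => h2 ((dvd_trans (by norm_num) h).trans hdx),
        fun h => h3 ((dvd_trans (by norm_num) h).trans hdx)⟩
  rw [hall]
  exact Nat.even_card_divisors_of_not_isSquare (Nat.not_isSquare_of_mod_four_eq_three (by omega))

theorem four_dvd_card_blockPairs_four_nine {N : ℕ} (hN : N % 4 = 3) :
    4 ∣ #(blockPairs (fun i => ¬ 4 ∣ i ∧ ¬ 9 ∣ i) N) := by
  rw [card_blockPairs]
  refine four_dvd_sum_antidiagonal_of_odd (Nat.odd_iff.2 (by omega)) _ (fun _ => mul_comm _ _)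
    fun xy hxy => ?_
  rw [HasAntidiagonal.mem_antidiagonal] at hxy
  rcases (by omega : (xy.1 % 4 = 2 ∨ xy.1 % 4 = 3) ∨ (xy.2 % 4 = 2 ∨ xy.2 % 4 = 3)) with h | h
  · exact (even_card_divisorsWith_four_nine h).two_dvd.mul_right _
  · exact (even_card_divisorsWith_four_nine h).two_dvd.mul_left _

theorem Rbar_four_nine_twelve_n_add_three (n : ℕ) : Rbar 4 9 (12 * n + 3) % 8 = 0 := by
  have h3 : 3 ∣ 12 * n + 3 := ⟨4 * n + 1, by ring⟩
  have hP3 : ∀ d, (¬ 4 ∣ 3 * d ∧ ¬ 9 ∣ 3 * d) ↔ ¬ 3 ∣ d ∧ ¬ 4 ∣ d ∧ ¬ 9 ∣ d := fun d => by omega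
  have hRbar := Rbar_modEq_eight 4 9 (by omega : 12 * n + 3 ≠ 0)
  rw [card_partitionsWithDistinctParts_one] at hRbar
  have hcount :=
    card_blockPairs_add_card_divisorsWith (P := fun i => ¬ 4 ∣ i ∧ ¬ 9 ∣ i) (12 * n + 3)
  have hA1 :=
    card_divisorsWith_eq_two_mul (P := fun i => ¬ 4 ∣ i ∧ ¬ 9 ∣ i) Nat.prime_three h3 hP3
  obtain ⟨s, hs⟩ :=
    succ_dvd_sum_div_divisorsWith (P := fun i => ¬ 4 ∣ i ∧ ¬ 9 ∣ i) Nat.prime_three h3 hP3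
  obtain ⟨t, ht⟩ := four_dvd_card_blockPairs_four_nine (N := 12 * n + 3) (by omega)
  unfold Nat.ModEq at hRbar
  omega
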